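/- Let k be a field and let A = (a_1,…,a_p) and B = (b_1,…,b_q) be lists of positive integers (the case n = 1). If k_1 ∈ ⟨B⟩ and k_2 ∈ ⟨A⟩ are positive integers with gcd(k_1,k_2) = 1, then C = k_1A ⋈ k_2B. In particular, if gcd(a_1,…,a_p) = 1 and gcd(b_1,…,b_q) = 1 (i.e., ⟨A⟩ and ⟨B⟩ are numerical semigroups), then ⟨A⟩ and ⟨B⟩ can be glued. -/

import Mathlib

open MvPolynomial

/-- The toric ideal `I_A` of a finite list `A` of vectors in `ℕ^n`:
the kernel of the `k`-algebra map `k[x_j : j ∈ σ] → k[t_1,…,t_n]`, `x_j ↦ t^{A j}`. -/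
noncomputable def toricIdeal (k : Type*) [CommRing k] {σ : Type*} {n : ℕ}
    (A : σ → Fin n → ℕ) : Ideal (MvPolynomial σ k) :=
  RingHom.ker (MvPolynomial.aeval (R := k) (fun j => ∏ i, MvPolynomial.X i ^ A j i) :
    MvPolynomial σ k →ₐ[k] MvPolynomial (Fin n) k)

/-- The semigroup ring `k[A] = k[x]/I_A`. -/
abbrev semigroupRing (k : Type*) [CommRing k] {σ : Type*} {n : ℕ}
    (A : σ → Fin n → ℕ) : Type _ :=
  MvPolynomial σ k ⧸ toricIdeal k A

/-- The list `C = k₁A ⊔ k₂B`. -/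
def glueList {n : ℕ} {σ τ : Type*} (k1 k2 : ℕ)
    (A : σ → Fin n → ℕ) (B : τ → Fin n → ℕ) : σ ⊕ τ → Fin n → ℕ :=
  Sum.elim (fun j i => k1 * A j i) (fun j i => k2 * B j i)

/-- The extension `I_A·R` of `I_A ⊆ k[x]` to `R = k[x,y]`. -/
noncomputable def extIdealLeft (k : Type*) [CommRing k] {n : ℕ} {σ : Type*} (τ : Type*)
    (A : σ → Fin n → ℕ) : Ideal (MvPolynomial (σ ⊕ τ) k) :=
  Ideal.map (MvPolynomial.rename (Sum.inl : σ → σ ⊕ τ)) (toricIdeal k A)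

/-- The extension `I_B·R` of `I_B ⊆ k[y]` to `R = k[x,y]`. -/
noncomputable def extIdealRight (k : Type*) [CommRing k] {n : ℕ} (σ : Type*) {τ : Type*}
    (B : τ → Fin n → ℕ) : Ideal (MvPolynomial (σ ⊕ τ) k) :=
  Ideal.map (MvPolynomial.rename (Sum.inr : τ → σ ⊕ τ)) (toricIdeal k B)

/-- `C = k₁A ⋈ k₂B` : `⟨C⟩` is a gluing of `⟨A⟩` and `⟨B⟩`, i.e.
`I_C = I_A·R + I_B·R + ⟨ρ⟩` for a binomial `ρ = x^c - y^d` with `ρ ∉ I_A·R + I_B·R`. -/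
def IsGluing (k : Type*) [CommRing k] {n : ℕ} {σ τ : Type*} [Fintype σ] [Fintype τ]
    (A : σ → Fin n → ℕ) (B : τ → Fin n → ℕ) (k1 k2 : ℕ) : Prop :=
  ∃ (c : σ → ℕ) (d : τ → ℕ),
    ((∏ j, X (Sum.inl j) ^ c j : MvPolynomial (σ ⊕ τ) k) - ∏ j, X (Sum.inr j) ^ d j) ∉
        extIdealLeft k τ A + extIdealRight k σ B ∧
    toricIdeal k (glueList k1 k2 A B) =
      extIdealLeft k τ A + extIdealRight k σ B +
        Ideal.span {((∏ j, X (Sum.inl j) ^ c j : MvPolynomial (σ ⊕ τ) k) -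
          ∏ j, X (Sum.inr j) ^ d j)}

/-- `⟨A⟩` and `⟨B⟩` can be glued. -/
def CanBeGlued (k : Type*) [CommRing k] {n : ℕ} {σ τ : Type*} [Fintype σ] [Fintype τ]
    (A : σ → Fin n → ℕ) (B : τ → Fin n → ℕ) : Prop :=
  ∃ k1 k2 : ℕ, 0 < k1 ∧ 0 < k2 ∧ IsGluing k A B k1 k2

/-- The `ℚ`-span of the columns of `A`. -/
def colSpanQ {n : ℕ} {σ : Type*} (A : σ → Fin n → ℕ) : Submodule ℚ (Fin n → ℚ) :=
  Submodule.span ℚ (Set.range fun j => fun i => (A j i : ℚ))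

/-- `rk A`, the rank over `ℚ` of the matrix whose columns are the vectors of `A`. -/
noncomputable def rkQ {n : ℕ} {σ : Type*} (A : σ → Fin n → ℕ) : ℕ :=
  Module.finrank ℚ (colSpanQ A)

/-- A gluable lattice point of `A` and `B`: a vector `u ∈ ℤ^n` with
`gcd(u_1,…,u_n) = 1` spanning `v(A) ∩ v(B)` over `ℚ`. -/
def IsGluableLatticePoint {n : ℕ} {σ τ : Type*} (A : σ → Fin n → ℕ) (B : τ → Fin n → ℕ)
    (u : Fin n → ℤ) : Prop :=
  Finset.univ.gcd u = 1 ∧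
  Submodule.span ℚ {fun i => ((u i : ℚ))} = colSpanQ A ⊓ colSpanQ B

/-- The additive submonoid of `ℤ^n` generated by the columns of `A`
(the semigroup `⟨A⟩`, viewed inside `ℤ^n`). -/
def intClosure {n : ℕ} {σ : Type*} (A : σ → Fin n → ℕ) : AddSubmonoid (Fin n → ℤ) :=
  AddSubmonoid.closure (Set.range fun j => fun i => (A j i : ℤ))

/-- The semigroup `⟨A⟩ ⊆ ℕ^n` generated by the columns of `A`. -/
def natClosure {n : ℕ} {σ : Type*} (A : σ → Fin n → ℕ) : AddSubmonoid (Fin n → ℕ) :=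
  AddSubmonoid.closure (Set.range A)

/-- The depth of a ring `S` with respect to an ideal `J`: the supremum of the lengths
of regular sequences on `S` consisting of elements of `J`. -/
noncomputable def idealDepth {S : Type*} [CommRing S] (J : Ideal S) : ℕ∞ :=
  sSup {m : ℕ∞ | ∃ rs : List S, (rs.length : ℕ∞) = m ∧ (∀ r ∈ rs, r ∈ J) ∧
    RingTheory.Sequence.IsRegular S rs}

/-- The maximal graded ideal of `k[A]`, generated by the images of the variables. -/
noncomputable def maxGradedIdeal (k : Type*) [CommRing k] {σ : Type*} {n : ℕ}
    (A : σ → Fin n → ℕ) : Ideal (semigroupRing k A) :=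
  Ideal.span (Set.range fun j => Ideal.Quotient.mk (toricIdeal k A) (X j))

/-- The depth of the semigroup ring `k[A]` with respect to its maximal graded ideal. -/
noncomputable def sgrDepth (k : Type*) [CommRing k] {σ : Type*} {n : ℕ}
    (A : σ → Fin n → ℕ) : ℕ∞ :=
  idealDepth (maxGradedIdeal k A)

/-- `k[A]` is Cohen–Macaulay: its depth equals its Krull dimension. -/
def sgrIsCohenMacaulay (k : Type*) [CommRing k] {σ : Type*} {n : ℕ}
    (A : σ → Fin n → ℕ) : Prop :=
  (sgrDepth k A : WithBot ℕ∞) = ringKrullDim (semigroupRing k A)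

open CategoryTheory in
/-- The projective dimension of a module `M` over `R`: the least `m` such that `M` admits a
projective resolution of length `m`. -/
noncomputable def modProjDim (R : Type*) [CommRing R] (M : ModuleCat R) : ℕ∞ :=
  sInf {m : ℕ∞ | ∃ P : ProjectiveResolution M,
    ∀ i : ℕ, m < (i : ℕ∞) → Limits.IsZero (P.complex.X i)}

/-!
The toric ideal of a list is spanned by the binomials `x^u - x^v` of equal degree: a polynomial
in the kernel, regrouped by the degrees of its monomials, is a combination of such binomials.

Take `ρ = x^c - y^d` with `c ⬝ a = k₂` and `d ⬝ b = k₁`. If `x^u y^v` and `x^u' y^v'` have the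
same degree for `C = k₁A ⊔ k₂B`, then `k₁ (u ⬝ a - u' ⬝ a) = k₂ (v' ⬝ b - v ⬝ b)`, so coprimality
gives `u ⬝ a = u' ⬝ a + k₂ t` and `v' ⬝ b = v ⬝ b + k₁ t`, and
`x^u y^v - x^u' y^v'`
`  = y^v (x^u - x^u' x^{tc}) + x^u' y^v (x^{tc} - y^{td}) + x^u' (y^v y^{td} - y^v')`
lies in `I_A·R + ⟨ρ⟩ + I_B·R`. Sending every `y_j` to `1` kills `I_A·R + I_B·R` but not `ρ`.
For numerical semigroups every large integer lies in `⟨A⟩` and in `⟨B⟩`, and `k₁ = N + 1`,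
`k₂ = k₁ M + 1` are coprime.
-/

open Matrix

section ToricIdeal

variable {k : Type*} [CommRing k] {σ : Type*} {n : ℕ} (A : σ → Fin n → ℕ)

variable (k) in
noncomputable abbrev toricMap : MvPolynomial σ k →ₐ[k] MvPolynomial (Fin n) k :=
  aeval fun j => ∏ i, X i ^ A j i

lemma mem_toricIdeal_iff (f : MvPolynomial σ k) :
    f ∈ toricIdeal k A ↔ toricMap k A f = 0 :=
  RingHom.mem_ker

lemma toricIdeal_le_toricIdeal_mul (m : ℕ) :
    toricIdeal k A ≤ toricIdeal k (fun j i => m * A j i) := by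
  have hexpand : toricMap k (fun j i => m * A j i) = (expand m).comp (toricMap k A) := by
    refine MvPolynomial.algHom_ext fun j => ?_
    simp [← pow_mul]
  intro f hf
  rw [mem_toricIdeal_iff, hexpand, AlgHom.comp_apply, (mem_toricIdeal_iff A f).mp hf, map_zero]

lemma map_rename_toricIdeal_le {σ' : Type*} (f : σ' → σ) :
    Ideal.map (rename f) (toricIdeal k (A ∘ f)) ≤ toricIdeal k A := by
  rw [Ideal.map_le_iff_le_comap]
  intro g hg
  rw [Ideal.mem_comap, mem_toricIdeal_iff, toricMap, aeval_rename]
  exact hg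

variable [Fintype σ]

lemma prod_X_pow_eq_monomial_one (u : σ → ℕ) :
    (∏ j, X j ^ u j : MvPolynomial σ k) = monomial (Finsupp.equivFunOnFinite.symm u) 1 := by
  rw [← prod_X_pow_eq_monomial]
  refine (Finset.prod_subset (Finset.subset_univ _) fun j _ hj => ?_).symm
  rw [show u j = 0 from Finsupp.notMem_support_iff.mp hj, pow_zero]

lemma monomial_one_eq_prod_X_pow (m : σ →₀ ℕ) :
    (monomial m 1 : MvPolynomial σ k) = ∏ j, X j ^ m j := by
  rw [prod_X_pow_eq_monomial_one, Finsupp.equivFunOnFinite_symm_coe]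

lemma rename_prod_X_pow {τ : Type*} (f : σ → τ) (u : σ → ℕ) :
    rename f (∏ j, X j ^ u j : MvPolynomial σ k) = ∏ j, X (f j) ^ u j := by
  simp only [map_prod, map_pow, rename_X]

lemma toricMap_prod_X_pow (u : σ → ℕ) :
    toricMap k A (∏ j, X j ^ u j) = ∏ i, X i ^ (u ᵥ* A) i := by
  simp only [map_prod, map_pow, aeval_X, ← Finset.prod_pow, ← pow_mul]
  rw [Finset.prod_comm]
  simp only [Finset.prod_pow_eq_pow_sum, vecMul, dotProduct, mul_comm]

lemma toricMap_monomial (m : σ →₀ ℕ) (c : k) :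
    toricMap k A (monomial m c) = monomial (Finsupp.equivFunOnFinite.symm (m ᵥ* A)) c := by
  rw [← mul_one c, ← C_mul_monomial, map_mul, monomial_one_eq_prod_X_pow,
    toricMap_prod_X_pow, prod_X_pow_eq_monomial_one, ← C_mul_monomial, toricMap, aeval_C]
  rfl

lemma coeff_toricMap (f : MvPolynomial σ k) (e : Fin n → ℕ) :
    coeff (Finsupp.equivFunOnFinite.symm e) (toricMap k A f) =
      ∑ m ∈ f.support.filter (fun m : σ →₀ ℕ => ⇑m ᵥ* A = e), coeff m f := by
  conv_lhs => rw [f.as_sum]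
  simp only [map_sum, toricMap_monomial, coeff_sum, coeff_monomial, Finset.sum_filter]
  refine Finset.sum_congr rfl fun m _ => ?_
  simp

theorem toricIdeal_le_of_forall_binomial_mem {J : Ideal (MvPolynomial σ k)}
    (hJ : ∀ u v : σ → ℕ, u ᵥ* A = v ᵥ* A → (∏ j, X j ^ u j - ∏ j, X j ^ v j) ∈ J) :
    toricIdeal k A ≤ J := by
  intro f hf
  set deg : (σ →₀ ℕ) → Fin n → ℕ := fun m => ⇑m ᵥ* A
  -- `μ e` is a fixed monomial of degree `e`; pairing each monomial of `f` with it leaves a sum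
  -- whose coefficients in degree `e` add up to a coefficient of `toricMap k A f = 0`
  set μ := Function.invFun deg
  have hfibres : ∑ m ∈ f.support, monomial (μ (deg m)) (coeff m f) = 0 := by
    rw [← Finset.sum_fiberwise_of_maps_to fun m hm => Finset.mem_image_of_mem deg hm]
    refine Finset.sum_eq_zero fun e _ => ?_
    rw [Finset.sum_congr rfl fun m hm => by rw [(Finset.mem_filter.mp hm).2], ← map_sum,
      ← coeff_toricMap, (mem_toricIdeal_iff A f).mp hf, coeff_zero, map_zero]
  have hsplit :
      f = ∑ m ∈ f.support, C (coeff m f) * (monomial m 1 - monomial (μ (deg m)) 1) := by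
    simp only [mul_sub, C_mul_monomial, mul_one, Finset.sum_sub_distrib, hfibres, sub_zero]
    exact f.as_sum
  rw [hsplit]
  refine Ideal.sum_mem _ fun m _ => J.mul_mem_left _ ?_
  rw [monomial_one_eq_prod_X_pow, monomial_one_eq_prod_X_pow]
  exact hJ _ _ (Function.invFun_eq (f := deg) ⟨m, rfl⟩).symm

lemma prod_X_pow_sub_mem_toricIdeal {u v : σ → ℕ} (h : u ᵥ* A = v ᵥ* A) :
    (∏ j, X j ^ u j - ∏ j, X j ^ v j : MvPolynomial σ k) ∈ toricIdeal k A := by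
  rw [mem_toricIdeal_iff, map_sub, toricMap_prod_X_pow, toricMap_prod_X_pow, h, sub_self]

lemma vecMul_eq_of_prod_X_pow_sub_mem_toricIdeal [Nontrivial k] {u v : σ → ℕ}
    (h : (∏ j, X j ^ u j - ∏ j, X j ^ v j : MvPolynomial σ k) ∈ toricIdeal k A) :
    u ᵥ* A = v ᵥ* A := by
  rwa [mem_toricIdeal_iff, map_sub, sub_eq_zero, toricMap_prod_X_pow, toricMap_prod_X_pow,
    prod_X_pow_eq_monomial_one, prod_X_pow_eq_monomial_one, monomial_left_inj one_ne_zero,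
    Finsupp.equivFunOnFinite.symm.injective.eq_iff] at h

end ToricIdeal

section Gluing

variable {k : Type*} [CommRing k] {σ τ : Type*} {n : ℕ}

variable (k1 k2 : ℕ) (A : σ → Fin n → ℕ) (B : τ → Fin n → ℕ)

lemma extIdealLeft_le_toricIdeal_glueList :
    extIdealLeft k τ A ≤ toricIdeal k (glueList k1 k2 A B) := by
  have hinl : glueList k1 k2 A B ∘ Sum.inl = fun j i => k1 * A j i := rfl
  have hmap := map_rename_toricIdeal_le (k := k) (glueList k1 k2 A B) Sum.inl
  rw [hinl] at hmap
  exact (Ideal.map_mono (toricIdeal_le_toricIdeal_mul A k1)).trans hmap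

lemma extIdealRight_le_toricIdeal_glueList :
    extIdealRight k σ B ≤ toricIdeal k (glueList k1 k2 A B) := by
  have hinr : glueList k1 k2 A B ∘ Sum.inr = fun j i => k2 * B j i := rfl
  have hmap := map_rename_toricIdeal_le (k := k) (glueList k1 k2 A B) Sum.inr
  rw [hinr] at hmap
  exact (Ideal.map_mono (toricIdeal_le_toricIdeal_mul B k2)).trans hmap

variable [Fintype σ] [Fintype τ]

variable (k) in
noncomputable def gluingBinomial (c : σ → ℕ) (d : τ → ℕ) : MvPolynomial (σ ⊕ τ) k :=
  ∏ j, X (Sum.inl j) ^ c j - ∏ j, X (Sum.inr j) ^ d j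

variable (k) in
noncomputable def gluingIdeal (c : σ → ℕ) (d : τ → ℕ) : Ideal (MvPolynomial (σ ⊕ τ) k) :=
  extIdealLeft k τ A + extIdealRight k σ B + Ideal.span {gluingBinomial k c d}

lemma vecMul_glueList (w : σ ⊕ τ → ℕ) :
    w ᵥ* glueList k1 k2 A B = k1 • ((w ∘ Sum.inl) ᵥ* A) + k2 • ((w ∘ Sum.inr) ᵥ* B) := by
  ext i
  simp [vecMul, dotProduct, Fintype.sum_sum_type, glueList, Finset.mul_sum, mul_left_comm]

lemma gluingBinomial_eq (c : σ → ℕ) (d : τ → ℕ) :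
    gluingBinomial k c d =
      ∏ j, X j ^ Sum.elim c (0 : τ → ℕ) j - ∏ j, X j ^ Sum.elim (0 : σ → ℕ) d j := by
  simp only [gluingBinomial, Fintype.prod_sum_type, Sum.elim_inl, Sum.elim_inr, Pi.zero_apply,
    pow_zero, Finset.prod_const_one, mul_one, one_mul]

lemma gluingIdeal_le_toricIdeal_glueList {c : σ → ℕ} {d : τ → ℕ}
    (h : k1 • (c ᵥ* A) = k2 • (d ᵥ* B)) :
    gluingIdeal k A B c d ≤ toricIdeal k (glueList k1 k2 A B) := by
  refine sup_le (sup_le (extIdealLeft_le_toricIdeal_glueList k1 k2 A B)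
    (extIdealRight_le_toricIdeal_glueList k1 k2 A B)) ?_
  rw [Ideal.span_le, Set.singleton_subset_iff, SetLike.mem_coe, gluingBinomial_eq]
  refine prod_X_pow_sub_mem_toricIdeal _ ?_
  simpa only [vecMul_glueList, Sum.elim_comp_inl, Sum.elim_comp_inr, zero_vecMul A,
    zero_vecMul B, smul_zero, add_zero, zero_add] using h

theorem gluingBinomial_notMem [Nontrivial k] (c : σ → ℕ) (d : τ → ℕ) (hc : c ᵥ* A ≠ 0) :
    gluingBinomial k c d ∉ extIdealLeft k τ A + extIdealRight k σ B := by
  intro hmem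
  -- `I_A·R + I_B·R` lies in the toric ideal of `A ⊔ 0·B`, where `ρ` has degrees `c ᵥ* A` and `0`
  have hC := sup_le (extIdealLeft_le_toricIdeal_glueList 1 0 A B)
    (extIdealRight_le_toricIdeal_glueList 1 0 A B) hmem
  rw [gluingBinomial_eq] at hC
  have hdeg := vecMul_eq_of_prod_X_pow_sub_mem_toricIdeal _ hC
  simp only [vecMul_glueList, Sum.elim_comp_inl, Sum.elim_comp_inr, one_smul, zero_nsmul,
    add_zero] at hdeg
  exact hc (hdeg.trans (zero_vecMul A))

end Gluing

theorem Nat.exists_eq_add_mul_of_mul_add_mul_eq {k1 k2 x x' y y' : ℕ} (hcop : k1.Coprime k2)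
    (hk2 : 0 < k2) (h : k1 * x + k2 * y = k1 * x' + k2 * y') (hx : x' ≤ x) :
    ∃ t, x = x' + k2 * t ∧ y' = y + k1 * t := by
  obtain ⟨D, rfl⟩ := Nat.exists_eq_add_of_le hx
  have hD : k1 * D + k2 * y = k2 * y' := by linarith
  obtain ⟨t, rfl⟩ : k2 ∣ D := hcop.symm.dvd_of_dvd_mul_left
    ((Nat.dvd_add_left (dvd_mul_right k2 y)).mp (hD ▸ dvd_mul_right k2 y'))
  refine ⟨t, rfl, Nat.eq_of_mul_eq_mul_left hk2 ?_⟩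
  linarith

theorem Nat.exists_forall_ge_mem_closure_range {σ : Type*} [Fintype σ] {a : σ → ℕ}
    (h : Finset.univ.gcd a = 1) : ∃ N, ∀ m ≥ N, m ∈ AddSubmonoid.closure (Set.range a) := by
  obtain ⟨N, hN⟩ := Nat.exists_mem_closure_of_ge (Set.range a)
  have hgcd : Nat.setGcd (Set.range a) ∣ Finset.univ.gcd a :=
    Finset.dvd_gcd fun j _ => Nat.setGcd_dvd_of_mem (Set.mem_range_self j)
  rw [h] at hgcd
  exact ⟨N, fun m hm => hN m hm (hgcd.trans (one_dvd m))⟩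

section NumericalGluing

variable {k : Type*} [CommRing k] {σ τ : Type*} [Fintype σ] [Fintype τ]
  (a : σ → ℕ) (b : τ → ℕ) {k1 k2 : ℕ} {c : σ → ℕ} {d : τ → ℕ}

lemma vecMul_weights_eq {u v : σ → ℕ} (h : u ⬝ᵥ a = v ⬝ᵥ a) :
    u ᵥ* (fun j (_ : Fin 1) => a j) = v ᵥ* fun j (_ : Fin 1) => a j :=
  funext fun _ => h

lemma mul_sub_mul_mem_gluingIdeal_of_le (hc : c ⬝ᵥ a = k2) (hd : d ⬝ᵥ b = k1)
    (hcop : k1.Coprime k2) (hk2 : 0 < k2) {u u' : σ → ℕ} {v v' : τ → ℕ}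
    (h : k1 * (u ⬝ᵥ a) + k2 * (v ⬝ᵥ b) = k1 * (u' ⬝ᵥ a) + k2 * (v' ⬝ᵥ b))
    (hle : u' ⬝ᵥ a ≤ u ⬝ᵥ a) :
    (∏ j, X (Sum.inl j) ^ u j) * (∏ j, X (Sum.inr j) ^ v j) -
        (∏ j, X (Sum.inl j) ^ u' j) * (∏ j, X (Sum.inr j) ^ v' j) ∈
      gluingIdeal k (fun j (_ : Fin 1) => a j) (fun j (_ : Fin 1) => b j) c d := by
  obtain ⟨t, hu, hv⟩ := Nat.exists_eq_add_mul_of_mul_add_mul_eq hcop hk2 h hle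
  set x : (σ → ℕ) → MvPolynomial (σ ⊕ τ) k := fun u => ∏ j, X (Sum.inl j) ^ u j
  set y : (τ → ℕ) → MvPolynomial (σ ⊕ τ) k := fun v => ∏ j, X (Sum.inr j) ^ v j
  have hxrename : ∀ u, x u = rename Sum.inl (∏ j, X j ^ u j) :=
    fun u => (rename_prod_X_pow _ u).symm
  have hyrename : ∀ v, y v = rename Sum.inr (∏ j, X j ^ v j) :=
    fun v => (rename_prod_X_pow _ v).symm
  have hxmul : ∀ u u' : σ → ℕ, x u * x u' = x (u + u') := fun u u' => by
    simp only [x, Pi.add_apply, pow_add, Finset.prod_mul_distrib]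
  have hymul : ∀ v v' : τ → ℕ, y v * y v' = y (v + v') := fun v v' => by
    simp only [y, Pi.add_apply, pow_add, Finset.prod_mul_distrib]
  have hxpow : ∀ u : σ → ℕ, x u ^ t = x (t • u) := fun u => by
    simp only [x, Pi.smul_apply, smul_eq_mul, ← Finset.prod_pow, ← pow_mul, mul_comm]
  have hypow : ∀ v : τ → ℕ, y v ^ t = y (t • v) := fun v => by
    simp only [y, Pi.smul_apply, smul_eq_mul, ← Finset.prod_pow, ← pow_mul, mul_comm]
  have hA : x u - x u' * x c ^ t ∈ extIdealLeft k τ (fun j (_ : Fin 1) => a j) := by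
    rw [hxpow, hxmul, hxrename, hxrename, ← map_sub]
    refine Ideal.mem_map_of_mem _ (prod_X_pow_sub_mem_toricIdeal _ (vecMul_weights_eq a ?_))
    rw [add_dotProduct, smul_dotProduct, hc, hu, smul_eq_mul, mul_comm]
  have hB : y v * y d ^ t - y v' ∈ extIdealRight k σ (fun j (_ : Fin 1) => b j) := by
    rw [hypow, hymul, hyrename, hyrename, ← map_sub]
    refine Ideal.mem_map_of_mem _ (prod_X_pow_sub_mem_toricIdeal _ (vecMul_weights_eq b ?_))
    rw [add_dotProduct, smul_dotProduct, hd, hv, smul_eq_mul, mul_comm]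
  have hρ : x c ^ t - y d ^ t ∈ Ideal.span {gluingBinomial k c d} :=
    Ideal.mem_span_singleton.mpr (sub_dvd_pow_sub_pow _ _ _)
  have hsplit : x u * y v - x u' * y v' =
      y v * (x u - x u' * x c ^ t) + x u' * y v * (x c ^ t - y d ^ t) +
        x u' * (y v * y d ^ t - y v') := by ring
  rw [hsplit]
  exact add_mem (add_mem
    (Submodule.mem_sup_left (Submodule.mem_sup_left (Ideal.mul_mem_left _ _ hA)))
    (Submodule.mem_sup_right (Ideal.mul_mem_left _ _ hρ)))
    (Submodule.mem_sup_left (Submodule.mem_sup_right (Ideal.mul_mem_left _ _ hB)))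

lemma prod_X_pow_sub_mem_gluingIdeal (hc : c ⬝ᵥ a = k2) (hd : d ⬝ᵥ b = k1)
    (hcop : k1.Coprime k2) (hk2 : 0 < k2) {u v : σ ⊕ τ → ℕ}
    (h : u ᵥ* glueList k1 k2 (fun j (_ : Fin 1) => a j) (fun j (_ : Fin 1) => b j) =
      v ᵥ* glueList k1 k2 (fun j (_ : Fin 1) => a j) (fun j (_ : Fin 1) => b j)) :
    ∏ j, X j ^ u j - ∏ j, X j ^ v j ∈
      gluingIdeal k (fun j (_ : Fin 1) => a j) (fun j (_ : Fin 1) => b j) c d := by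
  have hdeg := congrFun h 0
  simp only [vecMul_glueList, Pi.add_apply, Pi.smul_apply, smul_eq_mul] at hdeg
  rw [Fintype.prod_sum_type, Fintype.prod_sum_type]
  rcases le_total ((v ∘ Sum.inl) ⬝ᵥ a) ((u ∘ Sum.inl) ⬝ᵥ a) with hle | hle
  · exact mul_sub_mul_mem_gluingIdeal_of_le a b hc hd hcop hk2 hdeg hle
  · simpa only [neg_sub, Function.comp_apply] using
      neg_mem (mul_sub_mul_mem_gluingIdeal_of_le (k := k) a b hc hd hcop hk2 hdeg.symm hle)

theorem isGluing_of_coprime [Nontrivial k] (hk2 : 0 < k2)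
    (hk1b : k1 ∈ AddSubmonoid.closure (Set.range b))
    (hk2a : k2 ∈ AddSubmonoid.closure (Set.range a)) (hcop : k1.Coprime k2) :
    IsGluing k (fun j (_ : Fin 1) => a j) (fun j (_ : Fin 1) => b j) k1 k2 := by
  obtain ⟨c, hc⟩ := AddSubmonoid.mem_closure_range_iff_of_fintype.mp hk2a
  obtain ⟨d, hd⟩ := AddSubmonoid.mem_closure_range_iff_of_fintype.mp hk1b
  replace hc : c ⬝ᵥ a = k2 := by simp [hc, dotProduct]
  replace hd : d ⬝ᵥ b = k1 := by simp [hd, dotProduct]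
  have hnotMem := gluingBinomial_notMem (k := k) (fun j (_ : Fin 1) => a j)
    (fun j (_ : Fin 1) => b j) c d fun h => hk2.ne' (hc.symm.trans (congrFun h 0))
  have hle := gluingIdeal_le_toricIdeal_glueList (k := k) k1 k2 (fun j (_ : Fin 1) => a j)
    (fun j (_ : Fin 1) => b j) (c := c) (d := d) (funext fun _ => by
      change k1 * (c ⬝ᵥ a) = k2 * (d ⬝ᵥ b)
      rw [hc, hd, mul_comm])
  exact ⟨c, d, hnotMem, le_antisymm (toricIdeal_le_of_forall_binomial_mem _ fun _ _ h =>
    prod_X_pow_sub_mem_gluingIdeal a b hc hd hcop hk2 h) hle⟩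

theorem canBeGlued_of_gcd_eq_one [Nontrivial k] (ha : Finset.univ.gcd a = 1)
    (hb : Finset.univ.gcd b = 1) :
    CanBeGlued k (fun j (_ : Fin 1) => a j) (fun j (_ : Fin 1) => b j) := by
  obtain ⟨M, hM⟩ := Nat.exists_forall_ge_mem_closure_range ha
  obtain ⟨N, hN⟩ := Nat.exists_forall_ge_mem_closure_range hb
  have hk2 : M ≤ (N + 1) * M + 1 := Nat.le_succ_of_le (Nat.le_mul_of_pos_left _ N.succ_pos)
  refine ⟨N + 1, (N + 1) * M + 1, N.succ_pos, Nat.succ_pos _, isGluing_of_coprime a b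
    (Nat.succ_pos _) (hN _ N.le_succ) (hM _ hk2) ?_⟩
  exact (Nat.coprime_mul_left_add_right _ _ _).mpr (Nat.coprime_one_right _)

end NumericalGluing

theorem numerical_semigroups_glue_general (k : Type*) [Field k] {p q : ℕ}
    (a : Fin p → ℕ) (b : Fin q → ℕ) :
    (∀ k1 k2 : ℕ, 0 < k1 → 0 < k2 →
        k1 ∈ AddSubmonoid.closure (Set.range b) →
        k2 ∈ AddSubmonoid.closure (Set.range a) →
        Nat.Coprime k1 k2 →
        IsGluing k (fun j (_ : Fin 1) => a j) (fun j (_ : Fin 1) => b j) k1 k2) ∧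
      (Finset.univ.gcd a = 1 → Finset.univ.gcd b = 1 →
        CanBeGlued k (fun j (_ : Fin 1) => a j) (fun j (_ : Fin 1) => b j)) :=
  ⟨fun _ _ _ hk2 hk1b hk2a hcop => isGluing_of_coprime a b hk2 hk1b hk2a hcop,
    fun ha hb => canBeGlued_of_gcd_eq_one a b ha hb⟩

/-- For lists of positive integers (`n = 1`): if `k₁ ∈ ⟨B⟩` and
`k₂ ∈ ⟨A⟩` are positive and coprime, then `C = k₁A ⋈ k₂B`; in particular any two
numerical semigroups can be glued. -/
theorem numerical_semigroups_glue (k : Type*) [Field k] {p q : ℕ}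
    (a : Fin p → ℕ) (b : Fin q → ℕ) (ha : ∀ j, 0 < a j) (hb : ∀ j, 0 < b j) :
    (∀ k1 k2 : ℕ, 0 < k1 → 0 < k2 →
        k1 ∈ AddSubmonoid.closure (Set.range b) →
        k2 ∈ AddSubmonoid.closure (Set.range a) →
        Nat.Coprime k1 k2 →
        IsGluing k (fun j (_ : Fin 1) => a j) (fun j (_ : Fin 1) => b j) k1 k2) ∧
      (Finset.univ.gcd a = 1 → Finset.univ.gcd b = 1 →
        CanBeGlued k (fun j (_ : Fin 1) => a j) (fun j (_ : Fin 1) => b j)) :=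
  numerical_semigroups_glue_general k a b
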